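/- Let (α_n)_{n≥1} be positive reals and (γ_n)_{n≥1} positive with Σ γ_n = 1. Suppose for each n, h_n : [0,∞) → [0,∞) satisfies h_n(t) ≤ 2 e^{-α_n t}. Then H(t) := Σ_n γ_n h_n(t) satisfies H(t) ≤ 2 Σ_n γ_n e^{-α_n t}. Moreover, if α_n = 1/n and γ_n = c·n^{-γ-1} (with normalizing c > 0, γ > 0), then Σ_n γ_n e^{-α_n t} ≤ C (1+t)^{-γ} for some constant C depending on γ. -/

import Mathlib

/-!
The first bound is termwise. For the second, `exp (-x) ≤ K (1 + x) ^ (-(g + 1))`, so the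
`n`-th term `c (n + 1) ^ (-(g + 1)) exp (-t / (n + 1))` is at most `c K (n + 1 + t) ^ (-(g + 1))`.
The tangent-line inequality for the convex function `x ↦ x ^ (-g)` makes `g (b + 1) ^ (-(g + 1))`
at most `b ^ (-g) - (b + 1) ^ (-g)`, so the series `∑ (n + 1 + t) ^ (-(g + 1))` telescopes to
`O((1 + t) ^ (-g))`.
-/

open Real Finset

namespace Real

theorem one_sub_mul_sub_one_le_rpow_neg {x g : ℝ} (hx : 0 < x) (hg : 0 ≤ g) :
    1 - g * (x - 1) ≤ x ^ (-g) := by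
  calc 1 - g * (x - 1) ≤ 1 - g * log x := by
        gcongr
        exact log_le_sub_one_of_pos hx
    _ ≤ exp (-(g * log x)) := one_sub_le_exp_neg _
    _ = x ^ (-g) := by rw [rpow_def_of_pos hx]; ring_nf

theorem rpow_neg_add_mul_sub_le {a b g : ℝ} (ha : 0 < a) (hb : 0 < b) (hg : 0 ≤ g) :
    a ^ (-g) + g * a ^ (-(g + 1)) * (a - b) ≤ b ^ (-g) := by
  have h := one_sub_mul_sub_one_le_rpow_neg (div_pos hb ha) hg
  rw [div_rpow hb.le ha.le] at h
  have hag : 0 < a ^ (-g) := rpow_pos_of_pos ha _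
  rw [le_div_iff₀ hag] at h
  rw [show -(g + 1) = -g - 1 by ring, rpow_sub_one ha.ne']
  calc a ^ (-g) + g * (a ^ (-g) / a) * (a - b) = (1 - g * (b / a - 1)) * a ^ (-g) := by
        field_simp; ring
    _ ≤ b ^ (-g) := h

theorem rpow_le_exp_mul_exp {s y : ℝ} (hs : 0 < s) (hy : 0 < y) :
    y ^ s ≤ exp (s * log s - s) * exp y := by
  have h := log_le_sub_one_of_pos (div_pos hy hs)
  rw [log_div hy.ne' hs.ne'] at h
  have h' : s * (log y - log s) ≤ s * (y / s - 1) := mul_le_mul_of_nonneg_left h hs.le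
  rw [mul_sub, mul_sub, mul_div_cancel₀ _ hs.ne'] at h'
  rw [rpow_def_of_pos hy, ← exp_add, exp_le_exp]
  linarith

theorem rpow_neg_mul_exp_neg_div_le {s a t : ℝ} (hs : 0 < s) (ha : 0 < a) (hat : 0 < a + t) :
    a ^ (-s) * exp (-(t / a)) ≤ exp (s * log s - s + 1) * (a + t) ^ (-s) := by
  have h := rpow_le_exp_mul_exp hs (div_pos hat ha)
  rw [div_rpow hat.le ha.le, div_le_iff₀ (rpow_pos_of_pos ha s),
    show (a + t) / a = 1 + t / a by field_simp, exp_add] at h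
  rw [rpow_neg ha.le, rpow_neg hat.le, exp_neg, exp_add]
  calc (a ^ s)⁻¹ * (exp (t / a))⁻¹
        = ((a + t) ^ s)⁻¹ * ((a + t) ^ s / (a ^ s * exp (t / a))) := by field_simp
    _ ≤ ((a + t) ^ s)⁻¹ * (exp (s * log s - s) * exp 1) := by
        gcongr
        rw [div_le_iff₀ (by positivity)]
        linarith
    _ = _ := by ring

end Real

theorem sum_range_le_of_le_sub_succ {f b : ℕ → ℝ} (hb : ∀ n, 0 ≤ b n)
    (h : ∀ n, f n ≤ b n - b (n + 1)) (n : ℕ) : ∑ i ∈ range n, f i ≤ b 0 :=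
  calc ∑ i ∈ range n, f i ≤ ∑ i ∈ range n, (b i - b (i + 1)) := sum_le_sum fun i _ => h i
    _ = b 0 - b n := sum_range_sub' b n
    _ ≤ b 0 := sub_le_self _ (hb n)

section RpowTail

variable {g t : ℝ}

theorem rpow_neg_nat_succ_add_le_sub (hg : 0 < g) (ht : 0 ≤ t) (n : ℕ) :
    (((n + 1 : ℕ) : ℝ) + 1 + t) ^ (-(g + 1)) ≤
      ((n : ℝ) + 1 + t) ^ (-g) / g - (((n + 1 : ℕ) : ℝ) + 1 + t) ^ (-g) / g := by
  have h := Real.rpow_neg_add_mul_sub_le (a := (n : ℝ) + 1 + 1 + t) (b := (n : ℝ) + 1 + t)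
    (by positivity) (by positivity) hg.le
  rw [show (n : ℝ) + 1 + 1 + t - ((n : ℝ) + 1 + t) = 1 by ring, mul_one] at h
  push_cast
  rw [← sub_div, le_div_iff₀ hg]
  linarith

theorem summable_rpow_neg_nat_add (hg : 0 < g) (ht : 0 ≤ t) :
    Summable fun n : ℕ => ((n : ℝ) + 1 + t) ^ (-(g + 1)) :=
  (summable_nat_add_iff 1).1 <| summable_of_sum_range_le (fun _ => by positivity)
    (sum_range_le_of_le_sub_succ (fun _ => by positivity) (rpow_neg_nat_succ_add_le_sub hg ht))

theorem tsum_rpow_neg_nat_add_le (hg : 0 < g) (ht : 0 ≤ t) :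
    ∑' n : ℕ, ((n : ℝ) + 1 + t) ^ (-(g + 1)) ≤ (1 + 1 / g) * (1 + t) ^ (-g) := by
  rw [(summable_rpow_neg_nat_add hg ht).tsum_eq_zero_add]
  have head : (1 + t) ^ (-(g + 1)) ≤ (1 + t) ^ (-g) :=
    Real.rpow_le_rpow_of_exponent_le (by linarith) (by linarith)
  have tail := Real.tsum_le_of_sum_range_le (fun _ => by positivity)
    (sum_range_le_of_le_sub_succ (fun _ => by positivity) (rpow_neg_nat_succ_add_le_sub hg ht))
  rw [Nat.cast_zero, zero_add] at tail ⊢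
  calc _ ≤ (1 + t) ^ (-g) + (1 + t) ^ (-g) / g := add_le_add head tail
    _ = _ := by ring

theorem tsum_rpow_neg_mul_exp_neg_div_le (hg : 0 < g) (ht : 0 ≤ t) :
    ∑' n : ℕ, ((n : ℝ) + 1) ^ (-(g + 1)) * exp (-(t / ((n : ℝ) + 1))) ≤
      exp ((g + 1) * log (g + 1) - (g + 1) + 1) * (1 + 1 / g) * (1 + t) ^ (-g) := by
  set K := exp ((g + 1) * log (g + 1) - (g + 1) + 1)
  have hterm (n : ℕ) : ((n : ℝ) + 1) ^ (-(g + 1)) * exp (-(t / ((n : ℝ) + 1))) ≤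
      K * ((n : ℝ) + 1 + t) ^ (-(g + 1)) :=
    Real.rpow_neg_mul_exp_neg_div_le (by linarith) (by positivity) (by positivity)
  have hsum := (summable_rpow_neg_nat_add hg ht).mul_left K
  calc _ ≤ ∑' n : ℕ, K * ((n : ℝ) + 1 + t) ^ (-(g + 1)) :=
        (hsum.of_nonneg_of_le (fun _ => by positivity) hterm).tsum_le_tsum hterm hsum
    _ = K * ∑' n : ℕ, ((n : ℝ) + 1 + t) ^ (-(g + 1)) := tsum_mul_left
    _ ≤ K * ((1 + 1 / g) * (1 + t) ^ (-g)) := by gcongr; exact tsum_rpow_neg_nat_add_le hg ht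
    _ = _ := by ring

end RpowTail

theorem tsum_mul_le_tsum_mul {ι : Type*} {w u v : ι → ℝ} {B : ℝ} (hw : ∀ i, 0 ≤ w i)
    (hws : Summable w) (hu : ∀ i, 0 ≤ u i) (huv : ∀ i, u i ≤ v i) (hvB : ∀ i, v i ≤ B) :
    ∑' i, w i * u i ≤ ∑' i, w i * v i := by
  have hwv : Summable fun i => w i * v i :=
    (hws.mul_right B).of_nonneg_of_le (fun i => mul_nonneg (hw i) ((hu i).trans (huv i)))
      fun i => mul_le_mul_of_nonneg_left (hvB i) (hw i)
  have hle (i : ι) : w i * u i ≤ w i * v i := mul_le_mul_of_nonneg_left (huv i) (hw i)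
  exact (hwv.of_nonneg_of_le (fun i => mul_nonneg (hw i) (hu i)) hle).tsum_le_tsum hle hwv

theorem stmt6_general (α γ : ℕ → ℝ) (h : ℕ → ℝ → ℝ) (c g : ℝ) (hc : 0 < c) (hg : 0 < g)
    (hα : ∀ n, 0 < α n) (hγ : ∀ n, 0 < γ n) (hγs : Summable γ)
    (hh : ∀ n t, 0 ≤ t → 0 ≤ h n t ∧ h n t ≤ 2 * Real.exp (-(α n) * t)) :
    (∀ t : ℝ, 0 ≤ t →
      (∑' n, γ n * h n t) ≤ 2 * ∑' n, γ n * Real.exp (-(α n) * t))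
    ∧ ((∀ n : ℕ, α n = 1 / ((n : ℝ) + 1)) →
       (∀ n : ℕ, γ n = c * ((n : ℝ) + 1) ^ (-(g + 1))) →
        ∃ C : ℝ, 0 < C ∧ ∀ t : ℝ, 0 ≤ t →
          (∑' n, γ n * Real.exp (-(α n) * t)) ≤ C * (1 + t) ^ (-g)) := by
  refine ⟨fun t ht => ?_, fun hα' hγ' => ?_⟩
  · have hexp_le (n : ℕ) : 2 * exp (-(α n) * t) ≤ 2 := by
      have : exp (-(α n) * t) ≤ 1 := exp_le_one_iff.2 (by nlinarith [hα n])
      linarith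
    calc ∑' n, γ n * h n t ≤ ∑' n, γ n * (2 * exp (-(α n) * t)) :=
          tsum_mul_le_tsum_mul (fun n => (hγ n).le) hγs (fun n => (hh n t ht).1)
            (fun n => (hh n t ht).2) hexp_le
      _ = 2 * ∑' n, γ n * exp (-(α n) * t) := by
          simp_rw [mul_left_comm (γ _) 2]; exact tsum_mul_left
  · refine ⟨c * (exp ((g + 1) * log (g + 1) - (g + 1) + 1) * (1 + 1 / g)), by positivity,
      fun t ht => ?_⟩
    have hseries : ∑' n, γ n * exp (-(α n) * t) =
        c * ∑' n : ℕ, ((n : ℝ) + 1) ^ (-(g + 1)) * exp (-(t / ((n : ℝ) + 1))) := by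
      rw [← tsum_mul_left]
      congr 1 with n
      rw [hα', hγ', neg_mul, one_div_mul_eq_div, mul_assoc]
    rw [hseries, mul_assoc]
    gcongr
    exact tsum_rpow_neg_mul_exp_neg_div_le hg ht

/-- decay estimate for layered environments. Each layer couples at
exponential rate `α n`; the weighted superposition satisfies
`H(t) ≤ 2 Σ γ_n e^{-α_n t}`, and for `α_n = 1/n`, `γ_n = c n^{-γ-1}` the bound
decays like `(1+t)^{-γ}`. -/
theorem stmt6 (α γ : ℕ → ℝ) (h : ℕ → ℝ → ℝ) (c g : ℝ) (hc : 0 < c) (hg : 0 < g)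
    (hα : ∀ n, 0 < α n) (hγ : ∀ n, 0 < γ n) (hγs : Summable γ)
    (hγ1 : ∑' n, γ n = 1)
    (hh : ∀ n t, 0 ≤ t → 0 ≤ h n t ∧ h n t ≤ 2 * Real.exp (-(α n) * t)) :
    (∀ t : ℝ, 0 ≤ t →
      (∑' n, γ n * h n t) ≤ 2 * ∑' n, γ n * Real.exp (-(α n) * t))
    ∧ ((∀ n : ℕ, α n = 1 / ((n : ℝ) + 1)) →
       (∀ n : ℕ, γ n = c * ((n : ℝ) + 1) ^ (-(g + 1))) →
        ∃ C : ℝ, 0 < C ∧ ∀ t : ℝ, 0 ≤ t →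
          (∑' n, γ n * Real.exp (-(α n) * t)) ≤ C * (1 + t) ^ (-g)) :=
  stmt6_general α γ h c g hc hg hα hγ hγs hh
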